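/- Let G be a unicyclic graph whose unique cycle C has length k ≥ 5 and exactly one vertex of degree at least 3 on C, and let l be the number of leaves of G. Then MEG(G) = l + 2. -/

import Mathlib

/-!
The leaves lie in every MEG-set: the edge at a leaf lies on a shortest path only if the leaf is
an endpoint. Write the cycle as `vs i`, `i : ZMod k`, with branch vertex `vs 0`, and let
`a = (k - 1) / 2`. The leaves together with `vs a` and `vs (-a)` form an MEG-set: the pair
`vs a, vs (-a)` monitors the short arc between them; since every path from a leaf to the cycle
enters it at `vs 0`, a leaf and `vs (± a)` monitor the arc from `vs 0` to `vs (± a)`; and every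
tree edge lies on the unique path from some leaf to `vs 0`. Conversely, if `S` consists of the
leaves and one more vertex `z`, a shortest `vs 0`–`z` path has fewer than `k` edges and so
misses a cycle edge; prefixing it by tree paths gives shortest paths from every leaf to `z`
avoiding that edge, and paths between leaves avoid the cycle altogether, so that edge is not
monitored.
-/

open SimpleGraph

/-- Two vertices `x` and `y` monitor an edge `e` in `G`: there is a shortest path between
them, and `e` lies on every shortest path between `x` and `y`. -/
def Monitors {V : Type*} (G : SimpleGraph V) (x y : V) (e : Sym2 V) : Prop :=
  (∃ p : G.Walk x y, p.IsPath ∧ p.length = G.dist x y) ∧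
    ∀ p : G.Walk x y, p.IsPath → p.length = G.dist x y → e ∈ p.edges

/-- `S` is a monitoring edge-geodetic set of `G`. -/
def IsMEGSet {V : Type*} (G : SimpleGraph V) (S : Set V) : Prop :=
  ∀ e ∈ G.edgeSet, ∃ x ∈ S, ∃ y ∈ S, Monitors G x y e

/-- The minimum size of a monitoring edge-geodetic set of `G`. -/
noncomputable def megNum {V : Type*} (G : SimpleGraph V) : ℕ :=
  sInf {n | ∃ S : Set V, IsMEGSet G S ∧ S.ncard = n}

/-- The set of leaves (degree-1 vertices) of `G`. -/
def leaves {V : Type*} (G : SimpleGraph V) : Set V :=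
  {v | (G.neighborSet v).ncard = 1}

section Geodesics

variable {V : Type*} {G : SimpleGraph V} {x y z : V} {e : Sym2 V}

theorem Monitors.symm (h : Monitors G x y e) : Monitors G y x e := by
  obtain ⟨⟨p, hp, hpl⟩, hall⟩ := h
  refine ⟨⟨p.reverse, hp.reverse, by rw [Walk.length_reverse, hpl, dist_comm]⟩,
    fun q hq hql => ?_⟩
  simpa using hall q.reverse hq.reverse (by rw [Walk.length_reverse, hql, dist_comm])

theorem not_monitors_self : ¬ Monitors G x x e := fun h => by
  simpa using h.2 Walk.nil Walk.IsPath.nil (by simp)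

theorem notMem_leaves_of_mem_support {p : G.Walk x y} (hp : p.IsPath) {v : V}
    (hv : v ∈ p.support) (hvx : v ≠ x) (hvy : v ≠ y) : v ∉ leaves G := by
  obtain ⟨k, rfl, hk⟩ := Walk.mem_support_iff_exists_getVert.mp hv
  have hk0 : k ≠ 0 := by rintro rfl; simp at hvx
  have hkl : k ≠ p.length := by rintro rfl; simp at hvy
  intro hleaf
  obtain ⟨u, hu⟩ := Set.ncard_eq_one.mp hleaf
  have hprev : p.getVert (k - 1) ∈ G.neighborSet (p.getVert k) := by
    simpa [Nat.sub_add_cancel (Nat.pos_of_ne_zero hk0)] using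
      (p.adj_getVert_succ (i := k - 1) (by omega)).symm
  have hnext : p.getVert (k + 1) ∈ G.neighborSet (p.getVert k) := p.adj_getVert_succ (by omega)
  rw [hu, Set.mem_singleton_iff] at hprev hnext
  have := hp.getVert_injOn (by simp; omega) (by simp; omega) (hprev.trans hnext.symm)
  omega

theorem leaves_subset_of_isMEGSet {S : Set V} (hS : IsMEGSet G S) : leaves G ⊆ S := by
  intro v hv
  obtain ⟨u, hu⟩ := Set.ncard_eq_one.mp hv
  have hadj : G.Adj v u := by
    change u ∈ G.neighborSet v
    simp [hu]
  obtain ⟨x, hx, y, hy, ⟨p, hp, hpl⟩, hall⟩ := hS s(v, u) hadj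
  by_contra hvS
  exact notMem_leaves_of_mem_support hp (p.fst_mem_support_of_mem_edges (hall p hp hpl))
    (fun h => hvS (h ▸ hx)) (fun h => hvS (h ▸ hy)) hv

theorem dist_eq_add_of_forall_mem_support (hG : G.Connected)
    (hz : ∀ p : G.Walk x y, p.IsPath → z ∈ p.support) :
    G.dist x y = G.dist x z + G.dist z y := by
  classical
  obtain ⟨p, hp, hpl⟩ := hG.exists_path_of_dist x y
  have hzp := hz p hp
  have hsplit := congrArg Walk.length (p.take_spec hzp)
  rw [Walk.length_append] at hsplit
  have := dist_le (p.takeUntil z hzp)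
  have := dist_le (p.dropUntil z hzp)
  have := hG.dist_triangle (u := x) (v := z) (w := y)
  omega

theorem Monitors.of_forall_mem_support (hG : G.Connected)
    (hz : ∀ p : G.Walk x y, p.IsPath → z ∈ p.support) (h : Monitors G z y e) :
    Monitors G x y e := by
  classical
  refine ⟨hG.exists_path_of_dist x y, fun p hp hpl => ?_⟩
  have hzp := hz p hp
  have hsplit := congrArg Walk.length (p.take_spec hzp)
  rw [Walk.length_append] at hsplit
  have := dist_le (p.takeUntil z hzp)
  have := dist_le (p.dropUntil z hzp)
  have := dist_eq_add_of_forall_mem_support hG hz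
  exact p.edges_dropUntil_subset_edges hzp (h.2 _ (hp.dropUntil hzp) (by omega))

theorem monitors_of_forall_mem_edges (hG : G.Connected)
    (hz : ∀ p : G.Walk x y, p.IsPath → z ∈ p.support)
    (he : ∀ p : G.Walk x z, p.IsPath → e ∈ p.edges) : Monitors G x y e := by
  classical
  exact ⟨hG.exists_path_of_dist x y, fun p hp _ =>
    p.edges_takeUntil_subset_edges (hz p hp) (he _ (hp.takeUntil (hz p hp)))⟩

theorem megNum_eq_of_isMEGSet {S : Set V} (hS : IsMEGSet G S)
    (hmin : ∀ T, IsMEGSet G T → S.ncard ≤ T.ncard) : megNum G = S.ncard :=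
  le_antisymm (Nat.sInf_le ⟨S, hS, rfl⟩)
    (le_csInf ⟨_, S, hS, rfl⟩ (by rintro _ ⟨T, hT, rfl⟩; exact hmin T hT))

end Geodesics

theorem Set.exists_subset_insert_of_ncard_le_succ {α : Type*} [Nonempty α] {A S : Set α}
    (hS : S.Finite) (hAS : A ⊆ S) (h : S.ncard ≤ A.ncard + 1) : ∃ z, S ⊆ insert z A := by
  have : Finite ↑(S \ A) := hS.sdiff.to_subtype
  have hsub : (S \ A).Subsingleton := by
    rw [← Set.ncard_le_one_iff_subsingleton, Set.ncard_sdiff hAS (hS.subset hAS)]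
    omega
  rcases (S \ A).eq_empty_or_nonempty with hempty | ⟨z, hz⟩
  · exact ⟨Classical.arbitrary α, fun v hv =>
      Or.inr (by_contra fun hA => hempty.subset ⟨hv, hA⟩)⟩
  · exact ⟨z, fun v hv => or_iff_not_imp_right.mpr fun hA => hsub ⟨hv, hA⟩ hz⟩

section CircularDistance

variable {n : ℕ}

theorem natCast_zmod_ne_zero {m : ℕ} (h0 : m ≠ 0) (hm : m < n) : (m : ZMod n) ≠ 0 := by
  rw [Ne, ZMod.natCast_eq_zero_iff]
  exact fun hdvd => h0 (Nat.eq_zero_of_dvd_of_lt hdvd hm)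

theorem natAbs_valMinAbs_natCast [NeZero n] {m : ℕ} (hm : m < n) :
    (m : ZMod n).valMinAbs.natAbs = min m (n - m) := by
  rw [ZMod.valMinAbs_natAbs_eq_min, ZMod.val_natCast_of_lt hm]

theorem natAbs_valMinAbs_one_le [NeZero n] : (1 : ZMod n).valMinAbs.natAbs ≤ 1 := by
  rw [ZMod.valMinAbs_natAbs_eq_min, ZMod.val_one_eq_one_mod]
  exact (min_le_left _ _).trans (Nat.mod_le _ _)

theorem natAbs_valMinAbs_add_le_add (a b : ZMod n) :
    (a + b).valMinAbs.natAbs ≤ a.valMinAbs.natAbs + b.valMinAbs.natAbs :=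
  (ZMod.natAbs_valMinAbs_add_le a b).trans (Int.natAbs_add_le _ _)

end CircularDistance

section OneBranchCycle

variable {V : Type*} {n : ℕ}

def cycleEdges (vs : ZMod n → V) : Set (Sym2 V) := Set.range fun i => s(vs i, vs (i + 1))

def treePart (vs : ZMod n → V) : Set V := insert (vs 0) (Set.range vs)ᶜ

/-- The retraction of `G` onto its cycle that collapses the hanging trees to `vs 0`; it is
`1`-Lipschitz for the circular distance `|·|` on `ZMod n` (`valMinAbs.natAbs`). -/
noncomputable def cycleIndex (vs : ZMod n → V) (u : V) : ZMod n :=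
  open Classical in if hu : ∃ i, vs i = u then hu.choose else 0

/-- `vs` runs once around the cycle of the unicyclic graph `G`, and `vs 0` is the only vertex
of the cycle of degree at least `3`; that `G` has no other cycle is expressed by acyclicity of
`G` minus the cycle edges. -/
structure IsOneBranchCycle (G : SimpleGraph V) (vs : ZMod n → V) : Prop where
  connected : G.Connected
  five_le : 5 ≤ n
  injective : Function.Injective vs
  adj : ∀ i, G.Adj (vs i) (vs (i + 1))
  neighborSet_eq : ∀ i ≠ 0, G.neighborSet (vs i) = {vs (i - 1), vs (i + 1)}
  three_le_ncard : 3 ≤ (G.neighborSet (vs 0)).ncard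
  isAcyclic : (G.deleteEdges (cycleEdges vs)).IsAcyclic

namespace IsOneBranchCycle

variable {G : SimpleGraph V} {vs : ZMod n → V} {x y : V} {e : Sym2 V}

theorem neZero (h : IsOneBranchCycle G vs) : NeZero n := ⟨by have := h.five_le; omega⟩

theorem zmod_two_ne_zero (h : IsOneBranchCycle G vs) : (2 : ZMod n) ≠ 0 := by
  exact_mod_cast natCast_zmod_ne_zero (m := 2) (by norm_num) (by have := h.five_le; omega)

theorem vs_sub_one_ne_vs_add_one (h : IsOneBranchCycle G vs) (i : ZMod n) :
    vs (i - 1) ≠ vs (i + 1) := fun he =>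
  h.zmod_two_ne_zero (by linear_combination -h.injective he)

theorem adj_cases (h : IsOneBranchCycle G vs) {i : ZMod n} {u : V} (hadj : G.Adj (vs i) u) :
    u = vs (i + 1) ∨ u = vs (i - 1) ∨ (i = 0 ∧ u ∉ Set.range vs) := by
  by_cases hi : i = 0
  · subst hi
    by_cases hu : u ∈ Set.range vs
    · obtain ⟨j, rfl⟩ := hu
      have hj : j ≠ 0 := by rintro rfl; exact hadj.ne rfl
      have hmem : vs 0 ∈ G.neighborSet (vs j) := hadj.symm
      rw [h.neighborSet_eq j hj] at hmem
      rcases hmem with h1 | h1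
      · left; congr 1; linear_combination -h.injective h1
      · right; left; congr 1; linear_combination -h.injective h1
    · exact Or.inr (Or.inr ⟨rfl, hu⟩)
  · have hmem : u ∈ G.neighborSet (vs i) := hadj
    rw [h.neighborSet_eq i hi] at hmem
    rcases hmem with rfl | rfl
    · exact Or.inr (Or.inl rfl)
    · exact Or.inl rfl

theorem vs_notMem_treePart (h : IsOneBranchCycle G vs) {i : ZMod n} (hi : i ≠ 0) :
    vs i ∉ treePart vs := by
  rintro (h0 | hr)
  · exact hi (h.injective h0)
  · exact hr ⟨i, rfl⟩

theorem mem_treePart_of_adj (h : IsOneBranchCycle G vs) (hx : x ∉ Set.range vs)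
    (hadj : G.Adj x y) : y ∈ treePart vs := by
  by_cases hy : y ∈ Set.range vs
  · obtain ⟨i, rfl⟩ := hy
    rcases h.adj_cases hadj.symm with rfl | rfl | ⟨rfl, -⟩
    · exact absurd ⟨_, rfl⟩ hx
    · exact absurd ⟨_, rfl⟩ hx
    · exact Set.mem_insert _ _
  · exact Or.inr hy

theorem mem_cycleEdges_of_adj (h : IsOneBranchCycle G vs) {i : ZMod n} (hi : i ≠ 0) {u : V}
    (hadj : G.Adj (vs i) u) : s(vs i, u) ∈ cycleEdges vs := by
  have hmem : u ∈ G.neighborSet (vs i) := hadj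
  rw [h.neighborSet_eq i hi] at hmem
  rcases hmem with rfl | rfl
  · exact ⟨i - 1, by simp only [sub_add_cancel, Sym2.eq_swap]⟩
  · exact ⟨i, rfl⟩

theorem exists_ne_zero_mem_of_mem_cycleEdges (h : IsOneBranchCycle G vs)
    (he : e ∈ cycleEdges vs) : ∃ i ≠ 0, vs i ∈ e := by
  obtain ⟨i, rfl⟩ := he
  by_cases hi : i = 0
  · refine ⟨i + 1, fun h1 => ?_, Sym2.mem_mk_right _ _⟩
    have h1n : ((1 : ℕ) : ZMod n) ≠ 0 :=
      natCast_zmod_ne_zero one_ne_zero (by have := h.five_le; omega)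
    exact h1n (by simpa [hi] using h1)
  · exact ⟨i, hi, Sym2.mem_mk_left _ _⟩

theorem ncard_cycleEdges (h : IsOneBranchCycle G vs) : (cycleEdges vs).ncard = n := by
  have := h.neZero
  rw [cycleEdges, Set.ncard_range_of_injective, Nat.card_zmod]
  intro i j hij
  rcases Sym2.eq_iff.mp hij with ⟨h1, -⟩ | ⟨h1, h2⟩
  · exact h.injective h1
  · exact absurd (by linear_combination h.injective h2 - h.injective h1) h.zmod_two_ne_zero

theorem cycleIndex_vs (h : IsOneBranchCycle G vs) (i : ZMod n) : cycleIndex vs (vs i) = i := by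
  have hex : ∃ j, vs j = vs i := ⟨i, rfl⟩
  rw [cycleIndex, dif_pos hex]
  exact h.injective hex.choose_spec

theorem cycleIndex_of_notMem {u : V} (hu : u ∉ Set.range vs) : cycleIndex vs u = 0 := by
  unfold cycleIndex
  exact dif_neg hu

theorem natAbs_valMinAbs_le_one_of_adj (h : IsOneBranchCycle G vs) {u w : V} (hadj : G.Adj u w) :
    (cycleIndex vs w - cycleIndex vs u).valMinAbs.natAbs ≤ 1 := by
  have := h.neZero
  by_cases hu : u ∈ Set.range vs
  · obtain ⟨i, rfl⟩ := hu
    rcases h.adj_cases hadj with rfl | rfl | ⟨rfl, hw⟩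
    · simpa [h.cycleIndex_vs] using natAbs_valMinAbs_one_le
    · simpa [h.cycleIndex_vs, ZMod.natAbs_valMinAbs_neg] using natAbs_valMinAbs_one_le
    · simp [h.cycleIndex_vs, cycleIndex_of_notMem hw]
  · rcases h.mem_treePart_of_adj hu hadj with rfl | hw
    · simp [h.cycleIndex_vs, cycleIndex_of_notMem hu]
    · simp [cycleIndex_of_notMem hw, cycleIndex_of_notMem hu]

theorem natAbs_valMinAbs_le_length (h : IsOneBranchCycle G vs) {u w : V} (p : G.Walk u w) :
    (cycleIndex vs w - cycleIndex vs u).valMinAbs.natAbs ≤ p.length := by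
  induction p with
  | nil => simp
  | @cons u v w hadj q ih =>
    rw [Walk.length_cons, ← sub_add_sub_cancel _ (cycleIndex vs v)]
    exact (natAbs_valMinAbs_add_le_add _ _).trans
      (add_le_add ih (h.natAbs_valMinAbs_le_one_of_adj hadj))

theorem dist_le_of_eq_add (h : IsOneBranchCycle G vs) {i j : ZMod n} {d : ℕ} (hj : j = i + d) :
    G.dist (vs i) (vs j) ≤ d := by
  induction d generalizing j with
  | zero => simp [hj]
  | succ d ih =>
    subst hj
    have hstep : G.Adj (vs (i + d)) (vs (i + (d + 1 : ℕ))) := by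
      rw [Nat.cast_succ, ← add_assoc]; exact h.adj _
    calc G.dist (vs i) (vs (i + (d + 1 : ℕ)))
        ≤ G.dist (vs i) (vs (i + d)) + G.dist (vs (i + d)) (vs (i + (d + 1 : ℕ))) :=
          h.connected.dist_triangle
      _ ≤ d + 1 := add_le_add (ih rfl) (dist_eq_one_iff_adj.mpr hstep).le

theorem mem_edges_of_length_le (h : IsOneBranchCycle G vs) {d : ℕ} (hd : 2 * d < n)
    {i j : ZMod n} (hj : j = i + d) (p : G.Walk (vs i) (vs j)) (hp : p.length ≤ d) {m : ℕ}
    (hm : m < d) : s(vs (i + m), vs (i + m + 1)) ∈ p.edges := by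
  have := h.neZero
  induction d generalizing i m with
  | zero => omega
  | succ d ih =>
    have hnil : ¬ p.Nil := fun hnil => by
      have := h.natAbs_valMinAbs_le_length p
      rw [Walk.length_eq_zero_iff.mpr hnil, h.cycleIndex_vs, h.cycleIndex_vs,
        show j - i = ((d + 1 : ℕ) : ZMod n) by rw [hj]; ring,
        natAbs_valMinAbs_natCast (by omega)] at this
      omega
    obtain ⟨u, hadj, q, rfl⟩ := Walk.not_nil_iff.mp hnil
    rw [Walk.length_cons] at hp
    rcases h.adj_cases hadj with rfl | rfl | ⟨rfl, hu⟩
    · rcases m with _ | m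
      · simp
      · have := ih (by omega) (i := i + 1) (by rw [hj]; push_cast; ring) q (by omega)
          (m := m) (by omega)
        rw [Walk.edges_cons, show i + ((m + 1 : ℕ) : ZMod n) = i + 1 + m by push_cast; ring]
        exact List.mem_cons_of_mem _ this
    · have := h.natAbs_valMinAbs_le_length q
      rw [h.cycleIndex_vs, h.cycleIndex_vs,
        show j - (i - 1) = ((d + 2 : ℕ) : ZMod n) by rw [hj]; push_cast; ring,
        natAbs_valMinAbs_natCast (by omega)] at this
      omega
    · have := h.natAbs_valMinAbs_le_length q
      rw [h.cycleIndex_vs, cycleIndex_of_notMem hu,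
        show j - 0 = ((d + 1 : ℕ) : ZMod n) by rw [hj]; ring,
        natAbs_valMinAbs_natCast (by omega)] at this
      omega

theorem monitors_arc (h : IsOneBranchCycle G vs) {d : ℕ} (hd : 2 * d < n) {i j : ZMod n}
    (hj : j = i + d) {m : ℕ} (hm : m < d) :
    Monitors G (vs i) (vs j) s(vs (i + m), vs (i + m + 1)) :=
  ⟨h.connected.exists_path_of_dist _ _, fun p _ hpl =>
    h.mem_edges_of_length_le hd hj p (hpl ▸ h.dist_le_of_eq_add hj) hm⟩

theorem branch_mem_support (h : IsOneBranchCycle G vs) (hx : x ∈ treePart vs)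
    (hy : y ∈ Set.range vs) (p : G.Walk x y) : vs 0 ∈ p.support := by
  induction p with
  | nil =>
    rcases hx with rfl | hx
    · exact Walk.start_mem_support _
    · exact absurd hy hx
  | cons hadj q ih =>
    rcases hx with rfl | hx
    · exact Walk.start_mem_support _
    · exact List.mem_cons_of_mem _ (ih (h.mem_treePart_of_adj hx hadj) hy)

theorem mem_treePart_of_mem_support (h : IsOneBranchCycle G vs) {p : G.Walk x y}
    (hp : p.IsPath) (hx : x ∈ treePart vs) (hy : y ∈ treePart vs) {z : V}
    (hz : z ∈ p.support) : z ∈ treePart vs := by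
  classical
  by_contra hzT
  have hzr : z ∈ Set.range vs := by_contra fun hzr => hzT (Or.inr hzr)
  have htake := h.branch_mem_support hx hzr (p.takeUntil z hz)
  have hdrop : vs 0 ∈ (p.dropUntil z hz).support.tail := by
    have := h.branch_mem_support hy hzr (p.dropUntil z hz).reverse
    rw [Walk.support_reverse, List.mem_reverse, ← Walk.cons_tail_support] at this
    exact (List.mem_cons.mp this).resolve_left fun h0 => hzT (Or.inl h0.symm)
  have hnodup := hp.support_nodup
  rw [← p.take_spec hz, Walk.support_append] at hnodup
  exact List.disjoint_of_nodup_append hnodup htake hdrop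

theorem notMem_cycleEdges_of_mem_edges (h : IsOneBranchCycle G vs) {p : G.Walk x y}
    (hp : p.IsPath) (hx : x ∈ treePart vs) (hy : y ∈ treePart vs) (he : e ∈ p.edges) :
    e ∉ cycleEdges vs := fun hce => by
  obtain ⟨i, hi, hie⟩ := h.exists_ne_zero_mem_of_mem_cycleEdges hce
  exact h.vs_notMem_treePart hi
    (h.mem_treePart_of_mem_support hp hx hy (Walk.mem_support_of_mem_edges he hie))

theorem not_monitors_of_mem_treePart (h : IsOneBranchCycle G vs) (hx : x ∈ treePart vs)
    (hy : y ∈ treePart vs) (he : e ∈ cycleEdges vs) : ¬ Monitors G x y e :=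
  fun ⟨⟨p, hp, hpl⟩, hall⟩ => h.notMem_cycleEdges_of_mem_edges hp hx hy (hall p hp hpl) he

theorem eq_of_isPath (h : IsOneBranchCycle G vs) {p q : G.Walk x y} (hp : p.IsPath)
    (hq : q.IsPath) (hx : x ∈ treePart vs) (hy : y ∈ treePart vs) : p = q := by
  have hF : ∀ {r : G.Walk x y}, r.IsPath →
      ∀ e ∈ r.edges, e ∈ (G.deleteEdges (cycleEdges vs)).edgeSet := fun {r} hr e he => by
    rw [edgeSet_deleteEdges]
    exact ⟨r.edges_subset_edgeSet he, h.notMem_cycleEdges_of_mem_edges hr hx hy he⟩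
  have key := congrArg Subtype.val ((h.isAcyclic.subsingleton_path x y).elim
    ⟨_, hp.transfer (hF hp)⟩ ⟨_, hq.transfer (hF hq)⟩)
  refine Walk.ext_support ?_
  simpa only [Walk.support_transfer] using congrArg Walk.support key

theorem penultimate_eq_of_mem_support (h : IsOneBranchCycle G vs) {p : G.Walk (vs 0) x}
    (hp : p.IsPath) (hx : x ∈ treePart vs) (hadj : G.Adj y x) (hy : y ∈ p.support) :
    p.penultimate = y := by
  classical
  have hr : ((p.takeUntil y hy).concat hadj).IsPath :=
    (hp.takeUntil hy).concat (Walk.endpoint_notMem_support_takeUntil hp hy hadj.ne.symm) hadj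
  rw [← h.eq_of_isPath hr hp (Set.mem_insert _ _) hx, Walk.penultimate_concat]

theorem exists_isPath_mem_edges (h : IsOneBranchCycle G vs) (he : e ∈ G.edgeSet)
    (hce : e ∉ cycleEdges vs) :
    ∃ x ∉ Set.range vs, ∃ p : G.Walk (vs 0) x, p.IsPath ∧ e ∈ p.edges := by
  induction e with | _ a b => ?_
  rw [mem_edgeSet] at he
  have hT : ∀ {u w : V}, G.Adj u w → s(u, w) ∉ cycleEdges vs → u ∈ treePart vs := by
    intro u w hadj hce
    by_contra hu
    obtain ⟨i, rfl⟩ : u ∈ Set.range vs := by_contra fun hr => hu (Or.inr hr)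
    exact hce (h.mem_cycleEdges_of_adj (fun h0 => hu (Or.inl (congrArg vs h0))) hadj)
  have ha := hT he hce
  have hb := hT (G.adj_symm he) (by rwa [Sym2.eq_swap])
  obtain ⟨p, hp, -⟩ := h.connected.exists_path_of_dist (vs 0) a
  by_cases hbp : b ∈ p.support
  · have hnil : ¬ p.Nil := fun hnil => by
      rw [Walk.nil_iff_support_eq.mp hnil, List.mem_singleton] at hbp
      exact he.ne (hnil.eq.symm.trans hbp.symm)
    refine ⟨a, fun har => ?_, p, hp, ?_⟩
    · rcases ha with rfl | ha
      · exact hnil (Walk.isPath_iff_nil.mp hp)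
      · exact ha har
    · rw [Sym2.eq_swap, ← h.penultimate_eq_of_mem_support hp ha (G.adj_symm he) hbp]
      exact p.mk_penultimate_end_mem_edges hnil
  · refine ⟨b, fun hbr => ?_, p.concat he, hp.concat hbp he, by simp [Walk.edges_concat]⟩
    rcases hb with rfl | hb
    · exact hbp p.start_mem_support
    · exact hb hbr

theorem exists_leaf_isPath [Fintype V] (h : IsOneBranchCycle G vs) {u : V}
    (hu : u ∉ Set.range vs) (p : G.Walk (vs 0) u) (hp : p.IsPath) :
    ∃ ℓ ∈ leaves G, ∃ q : G.Walk (vs 0) ℓ, q.IsPath ∧ p.edges ⊆ q.edges := by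
  by_cases hleaf : u ∈ leaves G
  · exact ⟨u, hleaf, p, hp, List.Subset.refl _⟩
  have hnil : ¬ p.Nil := fun hnil => hu ⟨0, hnil.eq⟩
  have hpen : p.penultimate ∈ G.neighborSet u := G.adj_symm (p.adj_penultimate hnil)
  obtain ⟨w, hw, hwne⟩ : ∃ w, G.Adj u w ∧ w ≠ p.penultimate := by
    by_contra! hall
    exact hleaf (Set.ncard_eq_one.mpr ⟨_, Set.eq_singleton_iff_unique_mem.mpr ⟨hpen, hall⟩⟩)
  have hwp : w ∉ p.support := fun hwp =>
    hwne (h.penultimate_eq_of_mem_support hp (Or.inr hu) (G.adj_symm hw) hwp).symm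
  have hwr : w ∉ Set.range vs := by
    rcases h.mem_treePart_of_adj hu hw with rfl | hwr
    · exact absurd p.start_mem_support hwp
    · exact hwr
  obtain ⟨ℓ, hℓ, q, hq, hsub⟩ := exists_leaf_isPath h hwr (p.concat hw) (hp.concat hwp hw)
  refine ⟨ℓ, hℓ, q, hq, fun e he => hsub ?_⟩
  rw [Walk.edges_concat, List.concat_eq_append]
  exact List.mem_append_left _ he
termination_by Fintype.card V - p.length
decreasing_by
  have := (hp.concat hwp hw).length_lt
  rw [Walk.length_concat] at this ⊢
  omega

theorem notMem_range_of_mem_leaves (h : IsOneBranchCycle G vs) (hx : x ∈ leaves G) :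
    x ∉ Set.range vs := by
  rintro ⟨i, rfl⟩
  have hx : (G.neighborSet (vs i)).ncard = 1 := hx
  by_cases hi : i = 0
  · have := h.three_le_ncard
    subst hi
    omega
  · rw [h.neighborSet_eq i hi, Set.ncard_pair (h.vs_sub_one_ne_vs_add_one i)] at hx
    omega

theorem exists_leaf_monitors [Fintype V] (h : IsOneBranchCycle G vs) (he : e ∈ G.edgeSet)
    (hce : e ∉ cycleEdges vs) (j : ZMod n) : ∃ ℓ ∈ leaves G, Monitors G ℓ (vs j) e := by
  obtain ⟨x, hx, p, hp, hep⟩ := h.exists_isPath_mem_edges he hce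
  obtain ⟨ℓ, hℓ, q, hq, hsub⟩ := h.exists_leaf_isPath hx p hp
  have hℓT : ℓ ∈ treePart vs := Or.inr (h.notMem_range_of_mem_leaves hℓ)
  refine ⟨ℓ, hℓ, monitors_of_forall_mem_edges h.connected
    (fun r _ => h.branch_mem_support hℓT ⟨j, rfl⟩ r) fun r hr => ?_⟩
  rw [h.eq_of_isPath hr hq.reverse hℓT (Set.mem_insert _ _), Walk.edges_reverse,
    List.mem_reverse]
  exact hsub hep

theorem leaves_nonempty [Fintype V] (h : IsOneBranchCycle G vs) : (leaves G).Nonempty := by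
  obtain ⟨w, hwr, hadj⟩ : ∃ w ∉ Set.range vs, G.Adj (vs 0) w := by
    by_contra! hall
    have hsub : G.neighborSet (vs 0) ⊆ {vs (0 - 1), vs (0 + 1)} := by
      intro w hw
      rcases h.adj_cases hw with rfl | rfl | ⟨-, hwr⟩
      · exact Or.inr rfl
      · exact Or.inl rfl
      · exact absurd hw (hall w hwr)
    have := (Set.ncard_le_ncard hsub).trans (Set.ncard_insert_le _ _)
    have := h.three_le_ncard
    simp only [Set.ncard_singleton] at *
    omega
  obtain ⟨ℓ, hℓ, -⟩ := h.exists_leaf_isPath hwr (Walk.cons hadj Walk.nil)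
    (Walk.IsPath.nil.cons (by simpa using hadj.ne))
  exact ⟨ℓ, hℓ⟩

theorem isMEGSet_insert_insert_leaves [Fintype V] (h : IsOneBranchCycle G vs) :
    IsMEGSet G
      (insert (vs ((n - 1) / 2 : ℕ)) (insert (vs (-((n - 1) / 2 : ℕ))) (leaves G))) := by
  have := h.neZero
  have hn := h.five_le
  set a := (n - 1) / 2
  obtain ⟨ℓ, hℓ⟩ := h.leaves_nonempty
  have hℓT : ℓ ∈ treePart vs := Or.inr (h.notMem_range_of_mem_leaves hℓ)
  have lift : ∀ {j : ZMod n} {e}, Monitors G (vs 0) (vs j) e → Monitors G ℓ (vs j) e :=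
    fun hm => hm.of_forall_mem_support h.connected
      fun p _ => h.branch_mem_support hℓT ⟨_, rfl⟩ p
  intro e he
  by_cases hce : e ∈ cycleEdges vs
  · obtain ⟨i, rfl⟩ := hce
    have hi := ZMod.natCast_zmod_val i
    have hiv := ZMod.val_lt i
    rcases lt_or_ge i.val a with h1 | h1
    · refine ⟨ℓ, .inr (.inr hℓ), vs a, .inl rfl, lift ?_⟩
      simpa [hi] using h.monitors_arc (i := 0) (by omega) (zero_add _).symm h1
    rcases lt_or_ge i.val (n - a) with h2 | h2
    · refine ⟨vs a, .inl rfl, vs (-(a : ZMod n)), .inr (.inl rfl), ?_⟩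
      have := h.monitors_arc (d := n - 2 * a) (i := a) (j := -a) (by omega)
        (by rw [Nat.cast_sub (by omega), ZMod.natCast_self]; push_cast; ring)
        (m := i.val - a) (by omega)
      rwa [Nat.cast_sub h1, hi, add_sub_cancel] at this
    · refine ⟨ℓ, .inr (.inr hℓ), vs (-(a : ZMod n)), .inr (.inl rfl), lift ?_⟩
      refine Monitors.symm ?_
      have := h.monitors_arc (d := a) (i := -a) (j := 0) (by omega) (by ring)
        (m := i.val - (n - a)) (by omega)
      rwa [Nat.cast_sub h2, Nat.cast_sub (by omega : a ≤ n), ZMod.natCast_self, hi,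
        show -(a : ZMod n) + (i - (0 - a)) = i by ring] at this
  · obtain ⟨ℓ', hℓ', hm⟩ := h.exists_leaf_monitors he hce a
    exact ⟨ℓ', .inr (.inr hℓ'), vs a, .inl rfl, hm⟩

/-- For `z` on the cycle: a shortest path from `vs 0` to `z` has fewer than `n` edges, so it
misses a cycle edge, and prefixed by a shortest path from `x` to `vs 0` it is still shortest. -/
theorem exists_forall_not_monitors (h : IsOneBranchCycle G vs) (z : V) :
    ∃ e ∈ cycleEdges vs, ∀ x ∈ treePart vs, ¬ Monitors G x z e := by
  by_cases hz : z ∈ treePart vs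
  · exact ⟨_, ⟨0, rfl⟩, fun x hx => h.not_monitors_of_mem_treePart hx hz ⟨0, rfl⟩⟩
  obtain ⟨j, rfl⟩ : z ∈ Set.range vs := by_contra fun hr => hz (Or.inr hr)
  have := h.neZero
  obtain ⟨p, hp, hpl⟩ := h.connected.exists_path_of_dist (vs 0) (vs j)
  obtain ⟨e, hce, hep⟩ : ∃ e ∈ cycleEdges vs, e ∉ p.edges := by
    classical
    by_contra! hall
    have hle := Set.ncard_le_ncard (t := (p.edges.toFinset : Set (Sym2 V)))
      (fun e he => by simpa using hall e he)
    rw [h.ncard_cycleEdges, Set.ncard_coe_finset] at hle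
    have := p.edges.toFinset_card_le
    have := h.dist_le_of_eq_add (i := 0) (j := j) (by rw [zero_add, ZMod.natCast_zmod_val])
    have := ZMod.val_lt j
    rw [Walk.length_edges] at *
    omega
  refine ⟨e, hce, fun x hx hmon => ?_⟩
  obtain ⟨q, hq, hql⟩ := h.connected.exists_path_of_dist x (vs 0)
  have hlen : (q.append p).length = G.dist x (vs j) := by
    rw [Walk.length_append, hql, hpl, dist_eq_add_of_forall_mem_support h.connected
      fun r _ => h.branch_mem_support hx ⟨j, rfl⟩ r]
  have hmem := hmon.2 _ ((q.append p).isPath_of_length_eq_dist hlen) hlen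
  rw [Walk.edges_append, List.mem_append] at hmem
  exact hmem.elim (fun heq => h.notMem_cycleEdges_of_mem_edges hq hx (Set.mem_insert _ _) heq hce)
    hep

theorem ncard_leaves_add_two_le [Finite V] (h : IsOneBranchCycle G vs) {S : Set V}
    (hS : IsMEGSet G S) : (leaves G).ncard + 2 ≤ S.ncard := by
  have : Nonempty V := ⟨vs 0⟩
  by_contra! hlt
  obtain ⟨z, hz⟩ := Set.exists_subset_insert_of_ncard_le_succ (Set.toFinite S)
    (leaves_subset_of_isMEGSet hS) (by omega)
  obtain ⟨e, hce, hnot⟩ := h.exists_forall_not_monitors z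
  obtain ⟨x, hx, y, hy, hmon⟩ := hS e (by obtain ⟨i, rfl⟩ := hce; exact h.adj i)
  have hT : ∀ {v}, v ∈ leaves G → v ∈ treePart vs :=
    fun hv => Or.inr (h.notMem_range_of_mem_leaves hv)
  rcases hz hx with rfl | hxL <;> rcases hz hy with rfl | hyL
  · exact not_monitors_self hmon
  · exact hnot y (hT hyL) hmon.symm
  · exact hnot x (hT hxL) hmon
  · exact h.not_monitors_of_mem_treePart (hT hxL) (hT hyL) hce hmon

theorem megNum_eq [Fintype V] (h : IsOneBranchCycle G vs) :
    megNum G = (leaves G).ncard + 2 := by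
  have := h.neZero
  set a := (n - 1) / 2
  have hn := h.five_le
  have h2a : ((2 * a : ℕ) : ZMod n) ≠ 0 := natCast_zmod_ne_zero (by omega) (by omega)
  have hne : vs a ≠ vs (-(a : ZMod n)) := fun heq =>
    h2a (by push_cast; linear_combination h.injective heq)
  have hcard : (insert (vs a) (insert (vs (-(a : ZMod n))) (leaves G))).ncard =
      (leaves G).ncard + 2 := by
    rw [Set.ncard_insert_of_notMem, Set.ncard_insert_of_notMem]
    · exact fun hl => h.notMem_range_of_mem_leaves hl ⟨_, rfl⟩
    · rintro (heq | hl)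
      · exact hne heq
      · exact h.notMem_range_of_mem_leaves hl ⟨_, rfl⟩
  rw [← hcard]
  exact megNum_eq_of_isMEGSet h.isMEGSet_insert_insert_leaves fun T hT =>
    hcard ▸ h.ncard_leaves_add_two_le hT

end IsOneBranchCycle

end OneBranchCycle

namespace SimpleGraph.Walk

variable {V : Type*} {G : SimpleGraph V} {u : V}

def cyclicGetVert (c : G.Walk u u) (i : ZMod c.length) : V := c.getVert i.val

theorem cyclicGetVert_add_one (c : G.Walk u u) [NeZero c.length] (i : ZMod c.length) :
    c.cyclicGetVert (i + 1) = c.getVert (i.val + 1) := by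
  have hcast : i + 1 = ((i.val + 1 : ℕ) : ZMod c.length) := by
    push_cast
    rw [ZMod.natCast_zmod_val]
  rw [cyclicGetVert, hcast, ZMod.val_natCast]
  have := ZMod.val_lt i
  rcases Nat.lt_or_ge (i.val + 1) c.length with hlt | hge
  · rw [Nat.mod_eq_of_lt hlt]
  · rw [show i.val + 1 = c.length by omega, Nat.mod_self, getVert_zero, getVert_length]

theorem adj_cyclicGetVert_add_one (c : G.Walk u u) [NeZero c.length] (i : ZMod c.length) :
    G.Adj (c.cyclicGetVert i) (c.cyclicGetVert (i + 1)) := by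
  rw [cyclicGetVert_add_one]
  exact c.adj_getVert_succ (ZMod.val_lt i)

theorem IsCycle.cyclicGetVert_injective {c : G.Walk u u} (hc : c.IsCycle) [NeZero c.length] :
    Function.Injective c.cyclicGetVert := fun i j hij => by
  have := ZMod.val_lt i
  have := ZMod.val_lt j
  exact ZMod.val_injective _ (hc.getVert_injOn' (by simp; omega) (by simp; omega) hij)

theorem range_cyclicGetVert (c : G.Walk u u) [NeZero c.length] :
    Set.range c.cyclicGetVert = {v | v ∈ c.support} := by
  ext v
  constructor
  · rintro ⟨i, rfl⟩
    exact c.getVert_mem_support _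
  · intro hv
    obtain ⟨k, rfl, hk⟩ := mem_support_iff_exists_getVert.mp hv
    rcases hk.lt_or_eq with hlt | rfl
    · exact ⟨k, by rw [cyclicGetVert, ZMod.val_natCast_of_lt hlt]⟩
    · exact ⟨0, by rw [cyclicGetVert, ZMod.val_zero, getVert_zero, getVert_length]⟩

theorem exists_eq_cyclicGetVert_of_mem_edges (c : G.Walk u u) [NeZero c.length] {e : Sym2 V}
    (he : e ∈ c.edges) : ∃ i, e = s(c.cyclicGetVert i, c.cyclicGetVert (i + 1)) := by
  obtain ⟨d, hd, rfl⟩ := List.mem_map.mp he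
  obtain ⟨k, hk, rfl⟩ := List.getElem_of_mem hd
  refine ⟨k, ?_⟩
  rw [length_darts] at hk
  rw [darts_getElem_eq_getVert, cyclicGetVert_add_one, cyclicGetVert, ZMod.val_natCast_of_lt hk]
  rfl

end SimpleGraph.Walk

theorem IsOneBranchCycle.of_isCycle {V : Type*} [Finite V] {G : SimpleGraph V}
    (hG : G.Connected) {u : V} {c : G.Walk u u} (hc : c.IsCycle) (hk : 5 ≤ c.length)
    (hshare : ∀ (y : V) (c' : G.Walk y y), c'.IsCycle → ∃ e ∈ c'.edges, e ∈ c.edges)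
    (k : ZMod c.length) (hk3 : 3 ≤ (G.neighborSet (c.cyclicGetVert k)).ncard)
    (hdeg : ∀ v ∈ c.support, v ≠ c.cyclicGetVert k → (G.neighborSet v).ncard ≤ 2) :
    IsOneBranchCycle G fun i => c.cyclicGetVert (i + k) := by
  have : NeZero c.length := ⟨by omega⟩
  have hinj : Function.Injective fun i => c.cyclicGetVert (i + k) :=
    hc.cyclicGetVert_injective.comp (add_left_injective k)
  have hadj : ∀ i, G.Adj (c.cyclicGetVert (i + k)) (c.cyclicGetVert (i + 1 + k)) := fun i => by
    rw [add_right_comm]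
    exact c.adj_cyclicGetVert_add_one _
  refine ⟨hG, hk, hinj, hadj, fun i hi => ?_, by simpa using hk3, fun y c' hc' => ?_⟩
  · have hsub : {c.cyclicGetVert (i - 1 + k), c.cyclicGetVert (i + 1 + k)} ⊆
        G.neighborSet (c.cyclicGetVert (i + k)) := by
      rintro w (rfl | rfl)
      · simpa using (hadj (i - 1)).symm
      · exact hadj i
    have h2 : ((2 : ℕ) : ZMod c.length) ≠ 0 := natCast_zmod_ne_zero (by norm_num) (by omega)
    refine (Set.eq_of_subset_of_ncard_le hsub ?_).symm
    rw [Set.ncard_pair fun heq => h2 (by push_cast; linear_combination -hinj heq)]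
    refine hdeg _ ?_ fun heq => hi ?_
    · have hmem : c.cyclicGetVert (i + k) ∈ Set.range c.cyclicGetVert := ⟨_, rfl⟩
      rwa [c.range_cyclicGetVert] at hmem
    · simpa using hc.cyclicGetVert_injective heq
  · obtain ⟨e, hec', hec⟩ := hshare y (c'.mapLe (G.deleteEdges_le _)) (hc'.mapLe _)
    rw [Walk.edges_mapLe_eq_edges] at hec'
    have := c'.edges_subset_edgeSet hec'
    rw [edgeSet_deleteEdges] at this
    obtain ⟨j, rfl⟩ := c.exists_eq_cyclicGetVert_of_mem_edges hec
    exact this.2 ⟨j - k, by simp only [sub_add_cancel, sub_add_eq_add_sub]⟩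

theorem unicyclic_one_branch_MEG {V : Type*} [Fintype V] (G : SimpleGraph V)
    (hG : G.Connected) (x : V) (c : G.Walk x x) (hc : c.IsCycle) (hk : 5 ≤ c.length)
    (huniq : ∀ (y : V) (c' : G.Walk y y), c'.IsCycle → ∀ e, e ∈ c'.edges ↔ e ∈ c.edges)
    (hone : ∃! v, v ∈ c.support ∧ 3 ≤ (G.neighborSet v).ncard) :
    megNum G = (leaves G).ncard + 2 := by
  have : NeZero c.length := ⟨by omega⟩
  obtain ⟨b, ⟨hb, hb3⟩, hbuniq⟩ := hone
  obtain ⟨k, rfl⟩ : b ∈ Set.range c.cyclicGetVert := by rwa [c.range_cyclicGetVert]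
  refine (IsOneBranchCycle.of_isCycle hG hc hk (fun y c' hc' => ?_) k hb3
    fun v hv hvb => ?_).megNum_eq
  · obtain ⟨e, he⟩ := List.exists_mem_of_ne_nil _ (Walk.edges_eq_nil.not.mpr hc'.not_nil)
    exact ⟨e, he, (huniq y c' hc' e).mp he⟩
  · by_contra! h3
    exact hvb (hbuniq v ⟨hv, h3⟩)
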